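/- arXiv:1307.4919 — 2 statements merged into one kernel-verified Lean document; each statement's English description precedes it below -/
import Mathlib

section
/- Let b ∈ GL_n(K) and k ≥ 1, and let N ≥ 1 be an integer with N > μ((bσ)^j)_1 − μ((bσ)^j)_n for every 1 ≤ j ≤ k−1. Then for every g ∈ GL_n(W(k)) with g ≡ 1 (mod p^N) one has μ(((b·g)σ)^i) = μ((bσ)^i) for all i = 1,…,k. (In other words, each refined Hodge stratum H_{μ̄,k}(GL_n) is invariant under right multiplication by a principal congruence subgroup of GL_n(W(k)).) -/
/-!
Statement 1.  Setting: `p` prime, `κ` algebraically closed of characteristic `p`,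
`𝕎 = W(κ)`, `K = Frac(W(κ))`, `σ` the Frobenius automorphism of `K` (lifting the
Frobenius of `W(κ)`).  `(bσ)^i := b·σ(b)·…·σ^{i−1}(b)`.

If `N ≥ 1` satisfies `N > μ((bσ)^j)₁ − μ((bσ)^j)ₙ` for `1 ≤ j ≤ k−1`, then for every
`g ∈ GL_n(W(κ))` with `g ≡ 1 (mod p^N)` one has `μ(((b·g)σ)^i) = μ((bσ)^i)` for
`i = 1,…,k`.
-/

open Matrix

noncomputable section

variable (p : ℕ) [Fact p.Prime] (κ : Type) [Field κ] [IsAlgClosed κ] [CharP κ p]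

local notation "𝕎" => WittVector p κ
local notation "K" => FractionRing (WittVector p κ)

/-- `c ∈ GL_n(W(κ)) ⊆ GL_n(K)`. -/
def IsIntegralUnit {n : ℕ} (c : Matrix (Fin n) (Fin n) K) : Prop :=
  ∃ d : Matrix (Fin n) (Fin n) 𝕎, IsUnit d.det ∧ c = d.map (algebraMap 𝕎 K)

/-- `μ` is the Hodge point of `b`. -/
def IsHodgePoint {n : ℕ} (b : Matrix (Fin n) (Fin n) K) (μ : Fin n → ℤ) : Prop :=
  Antitone μ ∧ ∃ c₁ c₂ : Matrix (Fin n) (Fin n) K, IsIntegralUnit p κ c₁ ∧ IsIntegralUnit p κ c₂ ∧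
    b = c₁ * Matrix.diagonal (fun i => (p : K) ^ (μ i)) * c₂

/-- `twistedPow σ b i = (bσ)^i = b·σ(b)·σ²(b)···σ^{i−1}(b)`. -/
def twistedPow {n : ℕ} (σ : K ≃+* K) (b : Matrix (Fin n) (Fin n) K) :
    ℕ → Matrix (Fin n) (Fin n) K
  | 0 => 1
  | (i + 1) => b * (twistedPow σ b i).map ⇑σ

/-!
Write `(bσ)^j = c₁ D c₂` with `D = diag(p^μ)` and `c₁, c₂ ∈ GL_n(W)`. If `g ≡ 1 (mod p^N)`
and `μ₁ - μₙ ≤ N`, then `D⁻¹ (c₁⁻¹ g c₁) D` is still integral, with the unit determinant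
`det g`, so `g (bσ)^j = (bσ)^j w` with `w ∈ GL_n(W)`. As `σ` preserves `GL_n(W)` and Hodge
points, induction on `i` gives `((bg)σ)^i = (bσ)^i uᵢ` with `uᵢ ∈ GL_n(W)`, and right
multiplication by `GL_n(W)` does not change the Hodge point.
-/

section Conjugation

variable {ι R F : Type*} [Fintype ι] [DecidableEq ι] [CommRing R] [Field F] [Algebra R F]

theorem Matrix.det_eq_of_mul_map_eq_map_mul (hinj : Function.Injective (algebraMap R F))
    {A : Matrix ι ι F} (hA : A.det ≠ 0) {X Y : Matrix ι ι R}
    (h : A * Y.map (algebraMap R F) = X.map (algebraMap R F) * A) : Y.det = X.det := by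
  apply hinj
  have := congrArg det h
  rw [det_mul, det_mul, mul_comm (det _)] at this
  simpa only [RingHom.map_det, RingHom.mapMatrix_apply] using mul_right_cancel₀ hA this

theorem Matrix.exists_diagonal_zpow_mul_map_eq {π : R} (hπ : algebraMap R F π ≠ 0) {N : ℕ}
    {μ : ι → ℤ} (hμ : ∀ j l, μ j ≤ N + μ l) (E : Matrix ι ι R) :
    ∃ M : Matrix ι ι R,
      diagonal (fun i => algebraMap R F π ^ μ i) * M.map (algebraMap R F) =
        (π ^ N • E).map (algebraMap R F) * diagonal (fun i => algebraMap R F π ^ μ i) := by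
  -- conjugation by the diagonal rescales the `(j, l)` entry by `π ^ (μ l - μ j)`
  refine ⟨of fun j l => π ^ (N + μ l - μ j).toNat * E j l, ?_⟩
  ext j l
  have ht : (((N + μ l - μ j).toNat : ℕ) : ℤ) = N + μ l - μ j :=
    Int.toNat_of_nonneg (by linarith [hμ j l])
  simp only [diagonal_mul, mul_diagonal, map_apply, of_apply, Matrix.smul_apply, smul_eq_mul,
    map_mul, map_pow, ← zpow_natCast, ht]
  rw [← mul_assoc, ← zpow_add₀ hπ, mul_right_comm, ← zpow_add₀ hπ]
  ring_nf

end Conjugation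

set_option linter.unusedSectionVars false

variable {p κ} {n : ℕ}

theorem isIntegralUnit_one : IsIntegralUnit p κ (1 : Matrix (Fin n) (Fin n) K) :=
  ⟨1, by simp, (Matrix.map_one _ (map_zero _) (map_one _)).symm⟩

theorem IsIntegralUnit.mul {c₁ c₂ : Matrix (Fin n) (Fin n) K}
    (h₁ : IsIntegralUnit p κ c₁) (h₂ : IsIntegralUnit p κ c₂) : IsIntegralUnit p κ (c₁ * c₂) := by
  obtain ⟨d₁, hd₁, rfl⟩ := h₁
  obtain ⟨d₂, hd₂, rfl⟩ := h₂
  exact ⟨d₁ * d₂, by simpa only [det_mul] using hd₁.mul hd₂, Matrix.map_mul.symm⟩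

theorem IsIntegralUnit.exists_mul_eq_one {c : Matrix (Fin n) (Fin n) K}
    (h : IsIntegralUnit p κ c) : ∃ v, IsIntegralUnit p κ v ∧ c * v = 1 := by
  obtain ⟨d, hd, rfl⟩ := h
  refine ⟨d⁻¹.map (algebraMap 𝕎 K), ⟨d⁻¹, isUnit_nonsing_inv_det d hd, rfl⟩, ?_⟩
  rw [← Matrix.map_mul, mul_nonsing_inv d hd, Matrix.map_one _ (map_zero _) (map_one _)]

theorem IsIntegralUnit.map_frobenius {σ : K ≃+* K}
    (hσ : ∀ x : 𝕎, σ (algebraMap 𝕎 K x) = algebraMap 𝕎 K (WittVector.frobenius x))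
    {c : Matrix (Fin n) (Fin n) K} (h : IsIntegralUnit p κ c) :
    IsIntegralUnit p κ (c.map σ) := by
  obtain ⟨d, hd, rfl⟩ := h
  refine ⟨d.map WittVector.frobenius, ?_, ?_⟩
  · simpa only [RingHom.map_det, RingHom.mapMatrix_apply] using hd.map WittVector.frobenius
  · ext i j
    simp [hσ]

theorem isHodgePoint_one : IsHodgePoint p κ (1 : Matrix (Fin n) (Fin n) K) 0 :=
  ⟨antitone_const, 1, 1, isIntegralUnit_one, isIntegralUnit_one, by simp⟩

theorem IsHodgePoint.mul_right_iff {b v : Matrix (Fin n) (Fin n) K} {μ : Fin n → ℤ}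
    (hv : IsIntegralUnit p κ v) : IsHodgePoint p κ (b * v) μ ↔ IsHodgePoint p κ b μ := by
  have mul_right {b v} (hv : IsIntegralUnit p κ v) (h : IsHodgePoint p κ b μ) :
      IsHodgePoint p κ (b * v) μ := by
    obtain ⟨hμ, c₁, c₂, h₁, h₂, rfl⟩ := h
    exact ⟨hμ, c₁, c₂ * v, h₁, h₂.mul hv, by simp only [mul_assoc]⟩
  obtain ⟨w, hw, hvw⟩ := hv.exists_mul_eq_one
  refine ⟨fun h => ?_, mul_right hv⟩
  simpa only [mul_assoc, hvw, mul_one] using mul_right hw h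

theorem IsHodgePoint.map_frobenius {σ : K ≃+* K}
    (hσ : ∀ x : 𝕎, σ (algebraMap 𝕎 K x) = algebraMap 𝕎 K (WittVector.frobenius x))
    {b : Matrix (Fin n) (Fin n) K} {μ : Fin n → ℤ}
    (h : IsHodgePoint p κ b μ) : IsHodgePoint p κ (b.map σ) μ := by
  obtain ⟨hμ, c₁, c₂, h₁, h₂, rfl⟩ := h
  refine ⟨hμ, c₁.map σ, c₂.map σ, h₁.map_frobenius hσ, h₂.map_frobenius hσ, ?_⟩
  simp only [Matrix.map_mul, diagonal_map (map_zero σ), map_zpow₀, map_natCast]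

theorem IsHodgePoint.exists_map_mul_eq_mul {C : Matrix (Fin n) (Fin n) K} {μ : Fin n → ℤ}
    {N : ℕ} (hC : IsHodgePoint p κ C μ) (hμ : ∀ j l, μ j ≤ N + μ l)
    {g : Matrix (Fin n) (Fin n) 𝕎} (hg : IsUnit g.det)
    (hcong : ∀ i j, (p : 𝕎) ^ N ∣ g i j - (1 : Matrix (Fin n) (Fin n) 𝕎) i j) :
    ∃ w, IsIntegralUnit p κ w ∧ g.map (algebraMap 𝕎 K) * C = C * w := by
  obtain ⟨-, _, _, ⟨d₁, hd₁, rfl⟩, ⟨d₂, hd₂, rfl⟩, rfl⟩ := hC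
  set φ := algebraMap 𝕎 K
  have hp : (p : K) ≠ 0 := WittVector.FractionRing.p_nonzero p κ
  obtain ⟨E, hgE⟩ : ∃ E : Matrix (Fin n) (Fin n) 𝕎, g = 1 + (p : 𝕎) ^ N • E := by
    choose E hE using hcong
    refine ⟨of E, Matrix.ext fun i j => ?_⟩
    rw [Matrix.add_apply, Matrix.smul_apply, smul_eq_mul, of_apply, ← hE]
    ring
  have hconj : d₁⁻¹ * g * d₁ = 1 + (p : 𝕎) ^ N • (d₁⁻¹ * E * d₁) := by
    rw [hgE, mul_add, add_mul, mul_one, nonsing_inv_mul _ hd₁, Matrix.mul_smul, smul_mul]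
  obtain ⟨M, hM⟩ := exists_diagonal_zpow_mul_map_eq (π := (p : 𝕎)) (F := K)
    (by rwa [map_natCast]) hμ (d₁⁻¹ * E * d₁)
  rw [map_natCast] at hM
  set D := diagonal fun i => (p : K) ^ μ i
  have hD : D * (1 + M).map φ = (d₁⁻¹ * g * d₁).map φ * D := by
    rw [hconj, Matrix.map_add _ (map_add φ), Matrix.map_add _ (map_add φ),
      Matrix.map_one _ (map_zero φ) (map_one φ), mul_add, add_mul, mul_one, one_mul, hM]
  have hdetD : D.det ≠ 0 := by
    rw [det_diagonal]
    exact Finset.prod_ne_zero_iff.mpr fun i _ => zpow_ne_zero _ hp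
  have hM1 : IsUnit (1 + M).det := by
    rw [det_eq_of_mul_map_eq_map_mul (IsFractionRing.injective 𝕎 K) hdetD hD, det_mul, det_mul]
    exact ((isUnit_nonsing_inv_det d₁ hd₁).mul hg).mul hd₁
  refine ⟨(d₂⁻¹ * (1 + M) * d₂).map φ, ⟨_, ?_, rfl⟩, ?_⟩
  · rw [det_mul, det_mul]
    exact ((isUnit_nonsing_inv_det d₂ hd₂).mul hM1).mul hd₂
  have hinv {d : Matrix (Fin n) (Fin n) 𝕎} (hd : IsUnit d.det) (X : Matrix (Fin n) (Fin n) K) :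
      d.map φ * (d⁻¹.map φ * X) = X := by
    rw [← mul_assoc, ← Matrix.map_mul, mul_nonsing_inv d hd,
      Matrix.map_one _ (map_zero φ) (map_one φ), one_mul]
  calc g.map φ * (d₁.map φ * D * d₂.map φ)
      = d₁.map φ * ((d₁⁻¹ * g * d₁).map φ * D) * d₂.map φ := by
        simp only [Matrix.map_mul, mul_assoc, hinv hd₁]
    _ = d₁.map φ * (D * (1 + M).map φ) * d₂.map φ := by rw [hD]
    _ = d₁.map φ * D * d₂.map φ * (d₂⁻¹ * (1 + M) * d₂).map φ := by
        simp only [Matrix.map_mul, mul_assoc, hinv hd₂]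

theorem exists_twistedPow_mul_map_eq_mul {σ : K ≃+* K}
    (hσ : ∀ x : 𝕎, σ (algebraMap 𝕎 K x) = algebraMap 𝕎 K (WittVector.frobenius x))
    (b : Matrix (Fin n) (Fin n) K) {N : ℕ} {g : Matrix (Fin n) (Fin n) 𝕎} (hg : IsUnit g.det)
    (hcong : ∀ i j, (p : 𝕎) ^ N ∣ g i j - (1 : Matrix (Fin n) (Fin n) 𝕎) i j) (i : ℕ)
    (hspread : ∀ j < i, ∃ μ, IsHodgePoint p κ (twistedPow p κ σ b j) μ ∧ ∀ l m, μ l ≤ N + μ m) :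
    ∃ u, IsIntegralUnit p κ u ∧
      twistedPow p κ σ (b * g.map (algebraMap 𝕎 K)) i = twistedPow p κ σ b i * u := by
  induction i with
  | zero => exact ⟨1, isIntegralUnit_one, by simp [twistedPow]⟩
  | succ i ih =>
    obtain ⟨u, hu, hbu⟩ := ih fun j hj => hspread j (by omega)
    obtain ⟨μ, hC, hμ⟩ := hspread i (by omega)
    obtain ⟨w, hw, hgw⟩ := (hC.map_frobenius hσ).exists_map_mul_eq_mul hμ hg hcong
    refine ⟨w * u.map σ, hw.mul (hu.map_frobenius hσ), ?_⟩
    simp only [twistedPow, hbu, Matrix.map_mul, mul_assoc]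
    rw [← mul_assoc (g.map _), hgw, mul_assoc]

theorem statement_1 (n : ℕ) (hn : 0 < n) (σ : K ≃+* K)
    (hσ : ∀ x : 𝕎, σ (algebraMap 𝕎 K x) = algebraMap 𝕎 K (WittVector.frobenius x))
    (b : Matrix (Fin n) (Fin n) K)
    (k : ℕ) (N : ℕ)
    (μs : ℕ → Fin n → ℤ)
    (hμs : ∀ j, 1 ≤ j → j ≤ k - 1 → IsHodgePoint p κ (twistedPow p κ σ b j) (μs j))
    (hN : ∀ j, 1 ≤ j → j ≤ k - 1 → (N : ℤ) > μs j ⟨0, hn⟩ - μs j ⟨n - 1, by omega⟩)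
    (g : Matrix (Fin n) (Fin n) 𝕎) (hg : IsUnit g.det)
    (hcong : ∀ i j, (p : 𝕎) ^ N ∣ (g i j - (1 : Matrix (Fin n) (Fin n) 𝕎) i j)) :
    ∀ i, 1 ≤ i → i ≤ k → ∀ μ : Fin n → ℤ,
      IsHodgePoint p κ (twistedPow p κ σ (b * g.map (algebraMap 𝕎 K)) i) μ ↔
        IsHodgePoint p κ (twistedPow p κ σ b i) μ := by
  intro i _ hik μ
  obtain ⟨u, hu, hbu⟩ := exists_twistedPow_mul_map_eq_mul hσ b hg hcong i fun j hj => by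
    rcases Nat.eq_zero_or_pos j with rfl | hj0
    · exact ⟨0, isHodgePoint_one, fun _ _ => by simp⟩
    · have hH := hμs j hj0 (by omega)
      refine ⟨μs j, hH, fun l m => ?_⟩
      have hfirst : μs j l ≤ μs j ⟨0, hn⟩ := hH.1 (Fin.le_def.mpr (Nat.zero_le _))
      have hlast : μs j ⟨n - 1, by omega⟩ ≤ μs j m :=
        hH.1 (Fin.le_def.mpr (Nat.le_sub_one_of_lt m.isLt))
      linarith [hN j hj0 (by omega)]
  rw [hbu]
  exact IsHodgePoint.mul_right_iff hu
end
end

section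
/- Let b₀ ∈ GL_n(K), s ≥ 1 and a ∈ ℤ^n be such that (b₀σ)^s = diag(p^{a_1},…,p^{a_n}). Then there exists a constant C₀ such that for all k ≥ 1: |ā_k, μ((b₀σ)^k)| ≤ C₀, where ā_k is the decreasing rearrangement of the tuple ((k/s)·a_1,…,(k/s)·a_n). (In other words, the Hodge points of the σ-twisted powers of a decent element stay within bounded distance of the multiples of its Newton point.) -/
/-!
Statement 12.  Let `b₀ ∈ GL_n(K)` satisfy the decency equation
`(b₀σ)^s = diag(p^{a_1},…,p^{a_n})`.  Then there is a constant `C₀` such that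
for all `k ≥ 1`: `|ā_k, μ((b₀σ)^k)| ≤ C₀`, where `ā_k` is the decreasing
rearrangement of `((k/s)·a_1,…,(k/s)·a_n)` (expressed below via any permutation
`e` making the tuple decreasing).
-/

open Matrix

noncomputable section

variable (p : ℕ) [Fact p.Prime] (κ : Type) [Field κ] [IsAlgClosed κ] [CharP κ p]

local notation "𝕎" => WittVector p κ
local notation "K" => FractionRing (WittVector p κ)

/-- The distance `|x, x'| = Σ_{i : xᵢ > x'ᵢ} (xᵢ − x'ᵢ)` between two tuples. -/
def tdist {n : ℕ} (x x' : Fin n → ℚ) : ℚ := ∑ i, max (x i - x' i) 0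

/-!
Write `k = r + s q` with `r < s`. Since `σ` fixes powers of `p`, decency gives
`(b₀σ)^k = (b₀σ)^r · diag(p^{q a})`, and the finitely many matrices `(b₀σ)^r`, `r < s`, and their
inverses have all entries in `p^{-c} W(κ)` for a single `c`. The `p`-adic valuations of the
`j × j` minors of `c₁ · diag(p^μ) · c₂` are bounded below exactly by the sum of the `j` smallest
entries of `μ`, and multiplying by a matrix with entries in `p^{-c} W(κ)` lowers that bound by at
most `j c`. So the sums of the `j` smallest entries of `μ((b₀σ)^k)` and of `q a` differ by at
most `n c`; replacing `q` by `k / s` costs at most `Σ |a_i|`, and bounds on all these partial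
sums bound every coordinate of the difference, hence `|ā_k, μ((b₀σ)^k)|`.
-/

theorem zpow_sum₀ {G ι : Type*} [CommGroupWithZero G] {x : G} (hx : x ≠ 0) (s : Finset ι)
    (d : ι → ℤ) : x ^ (∑ i ∈ s, d i) = ∏ i ∈ s, x ^ d i := by
  classical
  induction s using Finset.cons_induction with
  | empty => simp
  | cons a s ha ih => rw [Finset.sum_cons, Finset.prod_cons, zpow_add₀ hx, ih]

open Finset in
theorem Finset.sum_le_sum_of_isUpperSet {α β : Type*} [LinearOrder α] [AddCommMonoid β]
    [PartialOrder β] [IsOrderedAddMonoid β] {f : α → β} (hf : Antitone f) {S T : Finset α}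
    (hS : IsUpperSet (S : Set α)) (hST : #T = #S) :
    ∑ i ∈ S, f i ≤ ∑ i ∈ T, f i := by
  rw [← sum_inter_add_sum_sdiff S T, ← sum_inter_add_sum_sdiff T S, inter_comm]
  refine add_le_add le_rfl ?_
  have hcard : #(S \ T) = #(T \ S) := card_sdiff_comm hST.symm
  obtain hempty | hne := (S \ T).eq_empty_or_nonempty
  · rw [hempty, card_empty, eq_comm, card_eq_zero] at hcard
    rw [hempty, hcard]
  -- every element of `T \ S` lies below every element of the upper set `S`
  set s₀ := (S \ T).min' hne
  have hs₀ : s₀ ∈ S := (mem_sdiff.mp ((S \ T).min'_mem hne)).1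
  calc ∑ i ∈ S \ T, f i ≤ #(S \ T) • f s₀ :=
        sum_le_card_nsmul _ _ _ fun i hi => hf ((S \ T).min'_le i hi)
    _ = #(T \ S) • f s₀ := by rw [hcard]
    _ ≤ ∑ i ∈ T \ S, f i := card_nsmul_le_sum _ _ _ fun i hi => hf <| le_of_lt <|
        lt_of_not_ge fun h => (mem_sdiff.mp hi).2 (hS h hs₀)

theorem Finset.abs_sum_comp_le_sum_abs {α β : Type*} [Fintype α] [AddCommGroup β] [LinearOrder β]
    [IsOrderedAddMonoid β] (e : α ≃ α) (f : α → β) (S : Finset α) :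
    |∑ i ∈ S, f (e i)| ≤ ∑ i, |f i| :=
  calc |∑ i ∈ S, f (e i)| ≤ ∑ i ∈ S, |f (e i)| := abs_sum_le_sum_abs _ _
    _ ≤ ∑ i, |f (e i)| :=
        sum_le_sum_of_subset_of_nonneg (subset_univ S) fun _ _ _ => abs_nonneg _
    _ = ∑ i, |f i| := e.sum_comp fun i => |f i|

theorem abs_div_mul_sub_le {k s : ℕ} (hs : 0 < s) {T U A B : ℤ} (hT : |T| ≤ A)
    (hU : |U - (k / s : ℕ) * T| ≤ B) : |(k : ℚ) / s * T - U| ≤ A + B := by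
  have hsplit : (k : ℚ) / s = ((k / s : ℕ) : ℚ) + ((k % s : ℕ) : ℚ) / s := by
    have hk : ((s * (k / s) + k % s : ℕ) : ℚ) = k := by rw [Nat.div_add_mod]
    push_cast at hk
    field_simp
    linarith
  have hfrac : |((k % s : ℕ) : ℚ) / s| ≤ 1 := by
    rw [abs_of_nonneg (by positivity), div_le_one (by exact_mod_cast hs)]
    exact_mod_cast (Nat.mod_lt k hs).le
  have hT' : |((k % s : ℕ) : ℚ) / s * T| ≤ A := by
    rw [abs_mul]
    exact (mul_le_of_le_one_left (abs_nonneg _) hfrac).trans (by exact_mod_cast hT)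
  have hU' : |((k / s : ℕ) : ℚ) * T - U| ≤ B := by
    have hUℚ := (Int.cast_le (R := ℚ)).mpr hU
    push_cast at hUℚ
    rwa [abs_sub_comm]
  calc |(k : ℚ) / s * T - U| = |((k % s : ℕ) : ℚ) / s * T + (((k / s : ℕ) : ℚ) * T - U)| := by
        rw [hsplit]; ring_nf
    _ ≤ A + B := (abs_add_le _ _).trans (add_le_add hT' hU')

theorem tdist_le_of_forall_isUpperSet {n : ℕ} {x y : Fin n → ℚ} {B : ℚ}
    (h : ∀ S : Finset (Fin n), IsUpperSet (S : Set (Fin n)) →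
      |∑ i ∈ S, x i - ∑ i ∈ S, y i| ≤ B) :
    tdist x y ≤ n * (2 * B) := by
  have hcoord : ∀ i, |x i - y i| ≤ 2 * B := fun i => by
    have hIci := h (Finset.Ici i) (by rw [Finset.coe_Ici]; exact isUpperSet_Ici i)
    have hIoi := h (Finset.Ioi i) (by rw [Finset.coe_Ioi]; exact isUpperSet_Ioi i)
    rw [Finset.Ici_eq_cons_Ioi, Finset.sum_cons, Finset.sum_cons] at hIci
    calc |x i - y i| = |(x i + ∑ j ∈ Finset.Ioi i, x j - (y i + ∑ j ∈ Finset.Ioi i, y j)) -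
          (∑ j ∈ Finset.Ioi i, x j - ∑ j ∈ Finset.Ioi i, y j)| := by ring_nf
      _ ≤ B + B := (abs_sub _ _).trans (add_le_add hIci hIoi)
      _ = 2 * B := by ring
  calc tdist x y ≤ ∑ _i : Fin n, 2 * B :=
        Finset.sum_le_sum fun i _ => (max_le (le_abs_self _) (abs_nonneg _)).trans (hcoord i)
    _ = n * (2 * B) := by simp

section Minors

open Finset

variable {R A : Type*} [CommRing R] [CommRing A] [Algebra R A]

theorem Submodule.prod_mem_pow {ι : Type*} {N : Submodule R A} {f : ι → A} {s : Finset ι}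
    (h : ∀ i ∈ s, f i ∈ N) : ∏ i ∈ s, f i ∈ N ^ #s := by
  classical
  induction s using Finset.cons_induction with
  | empty => exact Submodule.one_le.mp le_rfl
  | cons a s ha ih =>
    rw [prod_cons, card_cons, pow_succ']
    exact Submodule.mul_mem_mul (h a (mem_cons_self a s))
      (ih fun i hi => h i (mem_cons_of_mem hi))

theorem Matrix.det_mul_eq_sum_prod_mul_det_submatrix {ι m : Type*} [Fintype ι] [DecidableEq ι]
    [Fintype m] (X : Matrix ι m A) (Y : Matrix m ι A) :
    (X * Y).det = ∑ g : ι → m, (∏ i, Y (g i) i) * (X.submatrix id g).det := by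
  simp only [Matrix.det_apply', Matrix.mul_apply, prod_univ_sum, mul_sum, Fintype.piFinset_univ]
  rw [sum_comm]
  refine sum_congr rfl fun g _ => sum_congr rfl fun τ _ => ?_
  simp only [Matrix.submatrix_apply, id, prod_mul_distrib]
  ring

variable {m m' m'' : Type*}

def EntriesIn (N : Submodule R A) (M : Matrix m m' A) : Prop := ∀ i j, M i j ∈ N

def MinorsIn (j : ℕ) (N : Submodule R A) (M : Matrix m m' A) : Prop :=
  ∀ (r : Fin j → m) (c : Fin j → m'), (M.submatrix r c).det ∈ N

theorem EntriesIn.mul [Fintype m'] {E F : Submodule R A} {X : Matrix m m' A}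
    {Y : Matrix m' m'' A} (hX : EntriesIn E X) (hY : EntriesIn F Y) : EntriesIn (E * F) (X * Y) :=
  fun _ _ => Submodule.sum_mem _ fun _ _ => Submodule.mul_mem_mul (hX _ _) (hY _ _)

theorem EntriesIn.det_mem_pow [Fintype m] [DecidableEq m] {N : Submodule R A}
    {M : Matrix m m A} (h : EntriesIn N M) : M.det ∈ N ^ Fintype.card m := by
  rw [Matrix.det_apply]
  exact Submodule.sum_mem _ fun τ _ => by
    rw [Units.smul_def]
    exact zsmul_mem (Submodule.prod_mem_pow fun i _ => h _ _) _

theorem MinorsIn.transpose {j : ℕ} {N : Submodule R A} {M : Matrix m m' A} (h : MinorsIn j N M) :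
    MinorsIn j N Mᵀ := fun r c => by
  rw [← Matrix.transpose_submatrix, Matrix.det_transpose]
  exact h c r

theorem MinorsIn.mul_entriesIn [Fintype m'] {j : ℕ} {N E : Submodule R A} {M : Matrix m m' A}
    {Y : Matrix m' m'' A} (hM : MinorsIn j N M) (hY : EntriesIn E Y) :
    MinorsIn j (N * E ^ j) (M * Y) := fun r c => by
  rw [Matrix.submatrix_mul M Y r id c Function.bijective_id,
    Matrix.det_mul_eq_sum_prod_mul_det_submatrix]
  refine Submodule.sum_mem _ fun g _ => Submodule.mul_mem_mul_rev (hM r g) ?_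
  simpa using Submodule.prod_mem_pow (s := univ) fun i _ => hY (g i) (c i)

theorem MinorsIn.mul_mul [Fintype m] [Fintype m'] {j : ℕ} {N E F : Submodule R A}
    {X : Matrix m m A} {M : Matrix m m' A} {Y : Matrix m' m' A} (hX : EntriesIn E X)
    (hM : MinorsIn j N M) (hY : EntriesIn F Y) : MinorsIn j (N * E ^ j * F ^ j) (X * M * Y) := by
  have hXM : MinorsIn j (N * E ^ j) (X * M) := by
    simpa [Matrix.transpose_mul] using
      (hM.transpose.mul_entriesIn (Y := Xᵀ) fun i k => hX k i).transpose
  exact hXM.mul_entriesIn hY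

end Minors

section ZPowSpan

open Finset

variable {R L : Type*} [CommRing R] [Field L] [Algebra R L]

variable (L) in
/-- `x ∈ zpowSpan L ϖ m` says that `x` has `ϖ`-adic valuation at least `m`. -/
def zpowSpan (ϖ : R) (m : ℤ) : Submodule R L := Submodule.span R {algebraMap R L ϖ ^ m}

variable {ϖ : R}

theorem zpow_mem_zpowSpan (m : ℤ) : algebraMap R L ϖ ^ m ∈ zpowSpan L ϖ m :=
  Submodule.subset_span rfl

theorem algebraMap_mem_zpowSpan_zero (x : R) : algebraMap R L x ∈ zpowSpan L ϖ 0 :=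
  Submodule.mem_span_singleton.mpr ⟨x, by simp [Algebra.smul_def]⟩

theorem entriesIn_map_algebraMap {m m' : Type*} (d : Matrix m m' R) :
    EntriesIn (zpowSpan L ϖ 0) (d.map (algebraMap R L)) :=
  fun i j => algebraMap_mem_zpowSpan_zero (d i j)

theorem zpowSpan_mul (hϖ : algebraMap R L ϖ ≠ 0) (m m' : ℤ) :
    zpowSpan L ϖ m * zpowSpan L ϖ m' = zpowSpan L ϖ (m + m') := by
  rw [zpowSpan, zpowSpan, Submodule.span_mul_span, Set.singleton_mul_singleton,
    ← zpow_add₀ hϖ, zpowSpan]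

theorem zpowSpan_pow (m : ℤ) (j : ℕ) : zpowSpan L ϖ m ^ j = zpowSpan L ϖ (j * m) := by
  rw [zpowSpan, Submodule.span_pow, Set.singleton_pow, ← zpow_natCast, ← _root_.zpow_mul, mul_comm,
    zpowSpan]

theorem zpowSpan_antitone (hϖ : algebraMap R L ϖ ≠ 0) : Antitone (zpowSpan L ϖ) := by
  intro m' m h
  refine Submodule.span_singleton_le_iff_mem _ _ |>.mpr <|
    Submodule.mem_span_singleton.mpr ⟨ϖ ^ (m - m').toNat, ?_⟩
  rw [Algebra.smul_def, map_pow, ← zpow_natCast, ← zpow_add₀ hϖ, Int.toNat_of_nonneg (by omega),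
    sub_add_cancel]

theorem le_of_zpow_mem_zpowSpan (hϖ : Irreducible ϖ) (hinj : Function.Injective (algebraMap R L))
    {m t : ℤ} (h : algebraMap R L ϖ ^ t ∈ zpowSpan L ϖ m) : m ≤ t := by
  have hπ : algebraMap R L ϖ ≠ 0 := (map_ne_zero_iff _ hinj).mpr hϖ.ne_zero
  obtain ⟨w, hw⟩ := Submodule.mem_span_singleton.mp h
  by_contra! hlt
  have hunit : w * ϖ ^ (m - t).toNat = 1 := hinj <| by
    rw [map_mul, map_pow, map_one, ← zpow_natCast, Int.toNat_of_nonneg (by omega),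
      zpow_sub₀ hπ, ← mul_div_assoc, ← Algebra.smul_def, hw, div_self (zpow_ne_zero _ hπ)]
  exact hϖ.not_isUnit <| (isUnit_pow_iff (by omega)).mp (IsUnit.of_mul_eq_one_right _ hunit)

theorem exists_mem_zpowSpan_neg [IsDomain R] [IsDiscreteValuationRing R] [IsFractionRing R L]
    (hϖ : Irreducible ϖ) (x : L) : ∃ c : ℕ, x ∈ zpowSpan L ϖ (-c) := by
  obtain ⟨a, b, hb, rfl⟩ := IsFractionRing.div_surjective (A := R) x
  obtain ⟨c, u, rfl⟩ :=
    IsDiscreteValuationRing.eq_unit_mul_pow_irreducible (nonZeroDivisors.ne_zero hb) hϖ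
  refine ⟨c, Submodule.mem_span_singleton.mpr ⟨a * ↑u⁻¹, ?_⟩⟩
  rw [Algebra.smul_def, map_mul, map_mul, map_pow, map_units_inv, _root_.zpow_neg,
    zpow_natCast]
  ring

end ZPowSpan

section DiagonalMinors

open Finset Matrix

variable {R L : Type*} [CommRing R] [Field L] [Algebra R L] {ϖ : R}

theorem exists_entriesIn_zpowSpan_neg [IsDomain R] [IsDiscreteValuationRing R]
    [IsFractionRing R L] (hϖ : Irreducible ϖ) {ι m m' : Type*} [Finite ι] [Finite m] [Finite m']
    (M : ι → Matrix m m' L) : ∃ c : ℕ, ∀ i, EntriesIn (zpowSpan L ϖ (-c)) (M i) := by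
  have hπ : algebraMap R L ϖ ≠ 0 :=
    (map_ne_zero_iff _ (IsFractionRing.injective R L)).mpr hϖ.ne_zero
  choose c hc using fun x : ι × m × m' => exists_mem_zpowSpan_neg hϖ (M x.1 x.2.1 x.2.2)
  obtain ⟨C, hC⟩ := Finite.exists_le c
  exact ⟨C, fun i k l => zpowSpan_antitone hπ (by simpa using hC (i, k, l)) (hc (i, k, l))⟩

variable {ι : Type*} [DecidableEq ι] {d : ι → ℤ} {j : ℕ} {m : ℤ}

theorem minorsIn_diagonal_zpow (hπ : algebraMap R L ϖ ≠ 0)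
    (h : ∀ T : Finset ι, #T = j → m ≤ ∑ i ∈ T, d i) :
    MinorsIn j (zpowSpan L ϖ m) (diagonal fun i => algebraMap R L ϖ ^ d i) := by
  intro r c
  have hfactor : (diagonal fun i => algebraMap R L ϖ ^ d i).submatrix r c =
      diagonal (fun t => algebraMap R L ϖ ^ d (r t)) *
        ((1 : Matrix ι ι R).submatrix r c).map (algebraMap R L) := by
    ext; simp [diagonal_mul, diagonal_apply, one_apply]
  rw [hfactor, det_mul, det_diagonal, ← RingHom.mapMatrix_apply, ← RingHom.map_det]
  by_cases hr : Function.Injective r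
  · have hprod : ∏ t, algebraMap R L ϖ ^ d (r t) ∈ zpowSpan L ϖ m := by
      rw [← zpow_sum₀ hπ, ← sum_image hr.injOn]
      exact zpowSpan_antitone hπ (h _ (by rw [card_image_of_injective _ hr, card_fin]))
        (zpow_mem_zpowSpan _)
    have := Submodule.mul_mem_mul hprod (algebraMap_mem_zpowSpan_zero (L := L) (ϖ := ϖ)
      ((1 : Matrix ι ι R).submatrix r c).det)
    rwa [zpowSpan_mul hπ, add_zero] at this
  · obtain ⟨a, b, hab, hne⟩ := Function.not_injective_iff.mp hr
    have hrows : (1 : Matrix ι ι R).submatrix r c a = (1 : Matrix ι ι R).submatrix r c b :=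
      funext fun k => by rw [submatrix_apply, submatrix_apply, hab]
    rw [det_zero_of_row_eq hne hrows, map_zero, mul_zero]
    exact zero_mem _

theorem le_sum_of_minorsIn_diagonal_zpow (hϖ : Irreducible ϖ)
    (hinj : Function.Injective (algebraMap R L))
    (h : MinorsIn j (zpowSpan L ϖ m) (diagonal fun i => algebraMap R L ϖ ^ d i))
    {T : Finset ι} (hT : #T = j) : m ≤ ∑ i ∈ T, d i := by
  have hπ : algebraMap R L ϖ ≠ 0 := (map_ne_zero_iff _ hinj).mpr hϖ.ne_zero
  let e : T ≃ Fin j := Fintype.equivFinOfCardEq ((Fintype.card_coe T).trans hT)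
  have hr : Function.Injective fun t => (e.symm t : ι) :=
    Subtype.val_injective.comp e.symm.injective
  have hminor := h (fun t => (e.symm t : ι)) (fun t => (e.symm t : ι))
  rw [submatrix_diagonal _ _ hr, det_diagonal] at hminor
  have hsum : ∑ t, d (e.symm t) = ∑ i ∈ T, d i :=
    (e.symm.sum_comp fun i : T => d i).trans (sum_coe_sort T d)
  exact le_of_zpow_mem_zpowSpan hϖ hinj (by rwa [← hsum, zpow_sum₀ hπ])

theorem le_sum_of_diagonal_zpow_eq_mul [Fintype ι] (hϖ : Irreducible ϖ)
    (hinj : Function.Injective (algebraMap R L)) {d' : ι → ℤ} {X Y : Matrix ι ι L} {u v : ℤ}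
    (hX : EntriesIn (zpowSpan L ϖ u) X) (hY : EntriesIn (zpowSpan L ϖ v) Y)
    (h : diagonal (fun i => algebraMap R L ϖ ^ d' i) =
      X * diagonal (fun i => algebraMap R L ϖ ^ d i) * Y)
    (hm : ∀ T : Finset ι, #T = j → m ≤ ∑ i ∈ T, d i) {T : Finset ι} (hT : #T = j) :
    m + j * u + j * v ≤ ∑ i ∈ T, d' i := by
  have hπ : algebraMap R L ϖ ≠ 0 := (map_ne_zero_iff _ hinj).mpr hϖ.ne_zero
  have hminors := MinorsIn.mul_mul hX (minorsIn_diagonal_zpow hπ hm) hY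
  rw [zpowSpan_pow, zpowSpan_pow, zpowSpan_mul hπ, zpowSpan_mul hπ, ← h] at hminors
  exact le_sum_of_minorsIn_diagonal_zpow hϖ hinj hminors hT

end DiagonalMinors

theorem Matrix.map_diagonal_natCast_zpow {L F : Type*} [Field L] [FunLike F L L]
    [RingHomClass F L L] (f : F) {n : ℕ} (p : ℕ) (z : Fin n → ℤ) :
    (diagonal fun i => (p : L) ^ z i).map f = diagonal fun i => (p : L) ^ z i := by
  rw [diagonal_map (map_zero f)]
  simp [map_zpow₀]

section TwistedPow

omit [IsAlgClosed κ] [CharP κ p] in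
theorem twistedPow_add {n : ℕ} (σ : K ≃+* K) (b : Matrix (Fin n) (Fin n) K) (i j : ℕ) :
    twistedPow p κ σ b (i + j) = twistedPow p κ σ b i * (twistedPow p κ σ b j).map ⇑(σ ^ i) := by
  induction i with
  | zero => simp [twistedPow]
  | succ i ih =>
    rw [Nat.add_right_comm, twistedPow, ih, twistedPow, Matrix.mul_assoc,
      show ⇑σ = ⇑(σ : K →+* K) from rfl, Matrix.map_mul, Matrix.map_map, pow_succ']
    rfl

omit [IsAlgClosed κ] in
theorem twistedPow_mul_eq_diagonal {n s : ℕ} {σ : K ≃+* K} {b : Matrix (Fin n) (Fin n) K}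
    {a : Fin n → ℤ} (hdec : twistedPow p κ σ b s = diagonal fun i => (p : K) ^ a i) (q : ℕ) :
    twistedPow p κ σ b (s * q) = diagonal fun i => (p : K) ^ ((q : ℤ) * a i) := by
  induction q with
  | zero => simp [twistedPow]
  | succ q ih =>
    rw [Nat.mul_succ, twistedPow_add, ih, hdec, map_diagonal_natCast_zpow,
      diagonal_mul_diagonal]
    congr 1
    ext i
    rw [← zpow_add₀ (WittVector.FractionRing.p_nonzero p κ)]
    push_cast
    ring_nf

omit [IsAlgClosed κ] in
theorem twistedPow_add_mul_eq {n s : ℕ} {σ : K ≃+* K} {b : Matrix (Fin n) (Fin n) K}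
    {a : Fin n → ℤ} (hdec : twistedPow p κ σ b s = diagonal fun i => (p : K) ^ a i) (r q : ℕ) :
    twistedPow p κ σ b (r + s * q) =
      twistedPow p κ σ b r * diagonal fun i => (p : K) ^ ((q : ℤ) * a i) := by
  rw [twistedPow_add, twistedPow_mul_eq_diagonal p κ hdec, map_diagonal_natCast_zpow]

omit [IsAlgClosed κ] in
theorem isUnit_det_twistedPow_of_le {n s : ℕ} {σ : K ≃+* K} {b : Matrix (Fin n) (Fin n) K}
    {a : Fin n → ℤ} (hdec : twistedPow p κ σ b s = diagonal fun i => (p : K) ^ a i) {r : ℕ}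
    (hr : r ≤ s) : IsUnit (twistedPow p κ σ b r).det := by
  obtain ⟨t, rfl⟩ := Nat.exists_eq_add_of_le hr
  have hdet := congrArg det hdec
  rw [twistedPow_add, det_mul, det_diagonal] at hdet
  have hunit : IsUnit (∏ i, (p : K) ^ a i) := isUnit_iff_ne_zero.mpr <|
    Finset.prod_ne_zero_iff.mpr fun i _ => zpow_ne_zero _ (WittVector.FractionRing.p_nonzero p κ)
  exact isUnit_of_mul_isUnit_left (hdet ▸ hunit)

end TwistedPow

section Hodge

open Finset

omit [IsAlgClosed κ] [CharP κ p] in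
theorem IsIntegralUnit.isUnit_det {n : ℕ} {c : Matrix (Fin n) (Fin n) K}
    (h : IsIntegralUnit p κ c) : IsUnit c.det := by
  obtain ⟨d, hd, rfl⟩ := h
  rw [← RingHom.mapMatrix_apply, ← RingHom.map_det]
  exact hd.map _

omit [IsAlgClosed κ] in
theorem IsIntegralUnit.entriesIn {n : ℕ} {c : Matrix (Fin n) (Fin n) K}
    (h : IsIntegralUnit p κ c) : EntriesIn (zpowSpan K (p : 𝕎) 0) c := by
  obtain ⟨d, -, rfl⟩ := h
  exact entriesIn_map_algebraMap d

omit [IsAlgClosed κ] in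
theorem IsIntegralUnit.entriesIn_inv {n : ℕ} {c : Matrix (Fin n) (Fin n) K}
    (h : IsIntegralUnit p κ c) : EntriesIn (zpowSpan K (p : 𝕎) 0) c⁻¹ := by
  obtain ⟨d, hd, rfl⟩ := h
  rw [Matrix.inv_eq_right_inv (B := d⁻¹.map (algebraMap 𝕎 K)) (by
    rw [← Matrix.map_mul, Matrix.mul_nonsing_inv _ hd, Matrix.map_one _ (map_zero _) (map_one _)])]
  exact entriesIn_map_algebraMap _

omit [IsAlgClosed κ] in
theorem abs_sum_sub_le_of_isHodgePoint {n c : ℕ} {E : Matrix (Fin n) (Fin n) K}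
    {d μ : Fin n → ℤ} {e : Equiv.Perm (Fin n)}
    (hE : EntriesIn (zpowSpan K (p : 𝕎) (-c)) E) (hE' : EntriesIn (zpowSpan K (p : 𝕎) (-c)) E⁻¹)
    (hEdet : IsUnit E.det) (hd : Antitone (d ∘ e))
    (hμ : IsHodgePoint p κ (E * diagonal fun i => (p : K) ^ d i) μ)
    {S : Finset (Fin n)} (hS : IsUpperSet (S : Set (Fin n))) :
    |∑ i ∈ S, μ i - ∑ i ∈ S, d (e i)| ≤ #S * c := by
  obtain ⟨hμanti, c₁, c₂, hc₁, hc₂, hB⟩ := hμ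
  have hinj := IsFractionRing.injective 𝕎 K
  have hπ : algebraMap 𝕎 K (p : 𝕎) ≠ 0 :=
    (map_ne_zero_iff _ hinj).mpr (WittVector.irreducible p).ne_zero
  have hp : algebraMap 𝕎 K (p : 𝕎) = (p : K) := map_natCast _ p
  rw [← hp] at hB
  have h₁ : (diagonal fun i => algebraMap 𝕎 K (p : 𝕎) ^ μ i) =
      c₁⁻¹ * E * (diagonal fun i => algebraMap 𝕎 K (p : 𝕎) ^ d i) * c₂⁻¹ := by
    rw [Matrix.mul_assoc c₁⁻¹, hB, ← Matrix.mul_assoc, ← Matrix.mul_assoc,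
      Matrix.nonsing_inv_mul _ hc₁.isUnit_det, Matrix.one_mul, Matrix.mul_assoc,
      Matrix.mul_nonsing_inv _ hc₂.isUnit_det, Matrix.mul_one]
  have h₂ : (diagonal fun i => algebraMap 𝕎 K (p : 𝕎) ^ d i) =
      E⁻¹ * c₁ * (diagonal fun i => algebraMap 𝕎 K (p : 𝕎) ^ μ i) * c₂ := by
    rw [Matrix.mul_assoc (E⁻¹ * c₁), Matrix.mul_assoc E⁻¹, ← Matrix.mul_assoc c₁, ← hB,
      ← Matrix.mul_assoc, Matrix.nonsing_inv_mul _ hEdet, Matrix.one_mul]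
  have hdmin : ∀ T : Finset (Fin n), #T = #S → ∑ i ∈ S, d (e i) ≤ ∑ i ∈ T, d i := fun T hT => by
    simpa [sum_map] using sum_le_sum_of_isUpperSet hd hS (T := T.map e.symm.toEmbedding)
      (by rw [card_map, hT])
  have hμmin : ∀ T : Finset (Fin n), #T = #S → ∑ i ∈ S, μ i ≤ ∑ i ∈ T, μ i :=
    fun T hT => sum_le_sum_of_isUpperSet hμanti hS hT
  have hlow := le_sum_of_diagonal_zpow_eq_mul (WittVector.irreducible p) hinj
    (by simpa [zpowSpan_mul hπ] using hc₁.entriesIn_inv.mul hE) hc₂.entriesIn_inv h₁ hdmin rfl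
  have hup := le_sum_of_diagonal_zpow_eq_mul (WittVector.irreducible p) hinj
    (by simpa [zpowSpan_mul hπ] using hE'.mul hc₁.entriesIn) hc₂.entriesIn h₂ hμmin
    (T := S.map e.toEmbedding) (card_map _)
  rw [sum_map] at hup
  simp only [mul_neg, mul_zero, add_zero, Function.Embedding.coeFn_mk] at hlow hup
  rw [abs_le]
  constructor <;> linarith

end Hodge

theorem statement_12 (n : ℕ) (σ : K ≃+* K)
    (b₀ : Matrix (Fin n) (Fin n) K)
    (s : ℕ) (hs : 1 ≤ s) (a : Fin n → ℤ)
    (hdec : twistedPow p κ σ b₀ s = Matrix.diagonal fun i => (p : K) ^ (a i)) :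
    ∃ C₀ : ℚ, ∀ k : ℕ, 1 ≤ k →
      ∀ e : Equiv.Perm (Fin n), Antitone (fun i => ((k : ℚ) / (s : ℚ)) * (a (e i) : ℚ)) →
        ∀ μk : Fin n → ℤ, IsHodgePoint p κ (twistedPow p κ σ b₀ k) μk →
          tdist (fun i => ((k : ℚ) / (s : ℚ)) * (a (e i) : ℚ)) (fun i => (μk i : ℚ)) ≤ C₀ := by
  obtain ⟨c, hc⟩ := exists_entriesIn_zpowSpan_neg (L := K) (WittVector.irreducible p (k := κ))
    (Sum.elim (fun r : Fin s => twistedPow p κ σ b₀ r) fun r : Fin s => (twistedPow p κ σ b₀ r)⁻¹)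
  refine ⟨n * (2 * ((∑ i, |a i| : ℤ) + (n * c : ℤ))), fun k hk e he μ hμ => ?_⟩
  have hα : Antitone (a ∘ e) := fun i j hij => by
    exact_mod_cast le_of_mul_le_mul_left (he hij) (by positivity)
  have hr : k % s < s := Nat.mod_lt k hs
  rw [← Nat.mod_add_div k s, twistedPow_add_mul_eq p κ hdec] at hμ
  refine tdist_le_of_forall_isUpperSet fun S hS => ?_
  have hcomp := abs_sum_sub_le_of_isHodgePoint p κ (hc (.inl ⟨k % s, hr⟩))
    (hc (.inr ⟨k % s, hr⟩)) (isUnit_det_twistedPow_of_le p κ hdec hr.le)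
    (d := fun i => ((k / s : ℕ) : ℤ) * a i) (hα.const_mul (Nat.cast_nonneg _)) hμ hS
  rw [← Finset.mul_sum] at hcomp
  have hbound := abs_div_mul_sub_le hs (Finset.abs_sum_comp_le_sum_abs e a S)
    (hcomp.trans (show (S.card : ℤ) * c ≤ n * c by gcongr; simpa using S.card_le_univ))
  simpa [Finset.mul_sum] using hbound

end
end
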